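/- arXiv:1711.10783 — 2 statements merged into one kernel-verified Lean document; each statement's English description precedes it below -/
import Mathlib

section
/- Let x be a random vector in ℝ^d on a probability space with integrable second moments, let I be a nonempty finite index set, and let (x̂_i, P_i), i ∈ I, be estimate pairs of x such that at least one pair (x̂_j, P_j) is unbiased and conservative. Then for any vector x̂ ∈ ℝ^d and any symmetric matrix P ∈ ℝ^{d×d} satisfying P - (P_i + (x̂ - x̂_i)(x̂ - x̂_i)ᵀ) positive semi-definite for all i ∈ I, the pair (x̂, P) is conservative, i.e., P - E[(x - x̂)(x - x̂)ᵀ] is positive semi-definite. -/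
open MeasureTheory Matrix

/-!
By the bias–variance decomposition, the error matrix of `x` about any point `y` is its error
matrix about the mean plus `(y - E x)(y - E x)ᵀ`. For the unbiased pair `j` this gives
`Q - E[(x - y)(x - y)ᵀ] = (Q - (P j + (y - x̂ j)(y - x̂ j)ᵀ)) + (P j - E[(x - x̂ j)(x - x̂ j)ᵀ])`,
a sum of two positive semidefinite matrices.
-/

/-- The error "covariance" matrix `E[(x - a)(x - a)ᵀ]` of a random vector `x`
relative to a fixed vector `a`. -/
noncomputable def errCov {Ω : Type*} [MeasurableSpace Ω] (μ : Measure Ω) {d : ℕ}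
    (x : Ω → Fin d → ℝ) (a : Fin d → ℝ) : Matrix (Fin d) (Fin d) ℝ :=
  Matrix.of fun r s => ∫ ω, (x ω r - a r) * (x ω s - a s) ∂μ

section SecondMoments

variable {Ω : Type*} [MeasurableSpace Ω] {μ : Measure Ω} [IsProbabilityMeasure μ]
  {f g : Ω → ℝ}

lemma integral_sub_mul_sub (hf : Integrable f μ) (hg : Integrable g μ)
    (hfg : Integrable (fun ω => f ω * g ω) μ) (a b : ℝ) :
    ∫ ω, (f ω - a) * (g ω - b) ∂μ
      = ∫ ω, f ω * g ω ∂μ - b * ∫ ω, f ω ∂μ - a * ∫ ω, g ω ∂μ + a * b := by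
  have hfg_b : Integrable (fun ω => f ω * g ω - b * f ω) μ := hfg.sub (hf.const_mul b)
  have hfg_ab : Integrable (fun ω => f ω * g ω - b * f ω - a * g ω) μ :=
    hfg_b.sub (hg.const_mul a)
  have hexpand : (fun ω => (f ω - a) * (g ω - b))
      = fun ω => f ω * g ω - b * f ω - a * g ω + a * b := by
    funext ω; ring
  rw [hexpand, integral_add hfg_ab (integrable_const _), integral_sub hfg_b (hg.const_mul a),
    integral_sub hfg (hf.const_mul b), integral_const_mul, integral_const_mul, integral_const,
    probReal_univ, one_smul]

lemma integral_sub_mul_sub_eq_integral_sub_mean_add (hf : Integrable f μ) (hg : Integrable g μ)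
    (hfg : Integrable (fun ω => f ω * g ω) μ) (a b : ℝ) :
    ∫ ω, (f ω - a) * (g ω - b) ∂μ
      = ∫ ω, (f ω - ∫ ω, f ω ∂μ) * (g ω - ∫ ω, g ω ∂μ) ∂μ
        + (∫ ω, f ω ∂μ - a) * (∫ ω, g ω ∂μ - b) := by
  rw [integral_sub_mul_sub hf hg hfg, integral_sub_mul_sub hf hg hfg]
  ring

end SecondMoments

lemma errCov_eq_errCov_mean_add_vecMulVec {Ω : Type*} [MeasurableSpace Ω] (μ : Measure Ω)
    [IsProbabilityMeasure μ] {d : ℕ} (x : Ω → Fin d → ℝ)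
    (hx1 : ∀ r, Integrable (fun ω => x ω r) μ)
    (hx2 : ∀ r s, Integrable (fun ω => x ω r * x ω s) μ)
    {m : Fin d → ℝ} (hm : ∀ r, ∫ ω, x ω r ∂μ = m r) (y : Fin d → ℝ) :
    errCov μ x y = errCov μ x m + vecMulVec (y - m) (y - m) := by
  ext r s
  simp only [errCov, Matrix.add_apply, of_apply, vecMulVec_apply, Pi.sub_apply]
  rw [integral_sub_mul_sub_eq_integral_sub_mean_add (hx1 r) (hx1 s) (hx2 r s), hm, hm]
  ring

theorem conservative_of_dominates_all_general {Ω : Type*} [MeasurableSpace Ω]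
    (μ : Measure Ω) [IsProbabilityMeasure μ] {d : ℕ} (x : Ω → Fin d → ℝ)
    (hx1 : ∀ r, Integrable (fun ω => x ω r) μ)
    (hx2 : ∀ r s, Integrable (fun ω => x ω r * x ω s) μ)
    {I : Type*}
    (xhat : I → Fin d → ℝ) (P : I → Matrix (Fin d) (Fin d) ℝ)
    (hgood : ∃ j : I, (∀ r, ∫ ω, x ω r ∂μ = xhat j r) ∧
      (P j - errCov μ x (xhat j)).PosSemidef)
    (y : Fin d → ℝ) (Q : Matrix (Fin d) (Fin d) ℝ)
    (hdom : ∀ i : I,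
      (Q - (P i + Matrix.vecMulVec (y - xhat i) (y - xhat i))).PosSemidef) :
    (Q - errCov μ x y).PosSemidef := by
  obtain ⟨j, hunbiased, hconservative⟩ := hgood
  have hsplit : Q - errCov μ x y =
      (Q - (P j + vecMulVec (y - xhat j) (y - xhat j))) + (P j - errCov μ x (xhat j)) := by
    rw [errCov_eq_errCov_mean_add_vecMulVec μ x hx1 hx2 hunbiased]
    abel
  rw [hsplit]
  exact (hdom j).add hconservative

/-- Lemma 1: if at least one estimate pair `(xhat j, P j)` is unbiased and conservative,
then any pair `(y, Q)` with `Q ≥ P i + (y - xhat i)(y - xhat i)ᵀ` for all `i` is conservative. -/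
theorem conservative_of_dominates_all {Ω : Type*} [MeasurableSpace Ω]
    (μ : Measure Ω) [IsProbabilityMeasure μ] {d : ℕ} (x : Ω → Fin d → ℝ)
    (hx1 : ∀ r, Integrable (fun ω => x ω r) μ)
    (hx2 : ∀ r s, Integrable (fun ω => x ω r * x ω s) μ)
    {I : Type*} [Fintype I] [Nonempty I]
    (xhat : I → Fin d → ℝ) (P : I → Matrix (Fin d) (Fin d) ℝ)
    (hPsymm : ∀ i, (P i).IsSymm)
    (hgood : ∃ j : I, (∀ r, ∫ ω, x ω r ∂μ = xhat j r) ∧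
      (P j - errCov μ x (xhat j)).PosSemidef)
    (y : Fin d → ℝ) (Q : Matrix (Fin d) (Fin d) ℝ) (hQsymm : Q.IsSymm)
    (hdom : ∀ i : I,
      (Q - (P i + Matrix.vecMulVec (y - xhat i) (y - xhat i))).PosSemidef) :
    (Q - errCov μ x y).PosSemidef :=
  conservative_of_dominates_all_general μ x hx1 hx2 xhat P hgood y Q hdom
end

section
/- Let ν be a σ-finite measure on a measurable space, let I be a nonempty finite index set, let f_i, i ∈ I, be probability density functions with respect to ν that are strictly positive ν-almost everywhere, and let ω_i > 0 with Σ_{i∈I} ω_i = 1. Suppose C := ∫ Π_{i∈I} f_i^{ω_i} dν satisfies 0 < C < ∞, and define the GCI fusion f_GCI := C^{-1} Π_{i∈I} f_i^{ω_i}. Then f_GCI minimizes the weighted sum of Kullback–Leibler divergences: for every probability density f with respect to ν, Σ_{i∈I} ω_i D_KL(f ‖ f_i) ≥ Σ_{i∈I} ω_i D_KL(f_GCI ‖ f_i), where D_KL(f ‖ g) = ∫ f log(f/g) dν. -/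
/-!
Write `G = ∏ i, f i ^ w i`, so that `fGCI = C⁻¹ G`. Since `∑ i, w i = 1`, the pointwise identity
`∑ i, w i * d log (d / f i) = d log (d / fGCI) - d log C` holds for every `d ≥ 0`. At `d = fGCI`
it integrates to `∑ i, w i D(fGCI ‖ f i) = -log C`. For a density `g` with every `D(g ‖ f i)`
finite, the pointwise Gibbs inequality `g log (g / fGCI) ≥ g - fGCI` gives
`∑ i, w i D(g ‖ f i) ≥ ∫ (g - fGCI) - log C = -log C`.

The real work is showing that each `D(fGCI ‖ f i)` is finite. The bound
`|u| ≤ p⁻¹ exp (p u) + q⁻¹ exp (-q u)`, taken at `u = log (f j / f i)`, dominates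
`G |log (f j / f i)|` by the two geometric means obtained by moving the whole weight of `i` onto
`j` and vice versa, and these are integrable by the AM–GM inequality.
-/

open MeasureTheory Classical

/-- The Kullback–Leibler divergence `D_KL(f ‖ g) = ∫ f log (f / g) dν` between two
probability densities w.r.t. `ν`, valued in the extended reals, with the usual
conventions: it is `+∞` when `f` is not absolutely continuous w.r.t. `g` or when the
defining integral does not exist. -/

noncomputable def klDivR {α : Type*} [MeasurableSpace α] (ν : Measure α)
    (f g : α → ℝ) : EReal :=
  if Integrable (fun a => f a * Real.log (f a / g a)) ν ∧ (∀ᵐ a ∂ν, g a = 0 → f a = 0)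
  then ((∫ a, f a * Real.log (f a / g a) ∂ν : ℝ) : EReal)
  else ⊤

open Real

namespace EReal

theorem coe_finset_sum {ι : Type*} (s : Finset ι) (r : ι → ℝ) :
    ((∑ i ∈ s, r i : ℝ) : EReal) = ∑ i ∈ s, (r i : EReal) :=
  map_sum (⟨⟨((↑) : ℝ → EReal), coe_zero⟩, coe_add⟩ : ℝ →+ EReal) r s

theorem finset_sum_eq_top {ι : Type*} {s : Finset ι} {F : ι → EReal} {i : ι}
    (hF : ∀ j ∈ s, F j ≠ ⊥) (hi : i ∈ s) (htop : F i = ⊤) : ∑ j ∈ s, F j = ⊤ := by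
  rw [← Finset.add_sum_erase s F hi, htop]
  exact top_add_of_ne_bot <| Finset.sum_induction F (· ≠ ⊥)
    (fun _ _ ha hb => add_ne_bot_iff.2 ⟨ha, hb⟩) (by simp)
    fun j hj => hF j (Finset.mem_of_mem_erase hj)

end EReal

namespace Real

theorem abs_le_inv_mul_exp_add_inv_mul_exp {p q : ℝ} (hp : 0 < p) (hq : 0 < q) (u : ℝ) :
    |u| ≤ p⁻¹ * exp (p * u) + q⁻¹ * exp (-(q * u)) := by
  have hpos : ∀ {r : ℝ} (x : ℝ), 0 < r → 0 < r⁻¹ * exp x := fun x hr => by positivity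
  rcases le_total 0 u with hu | hu
  · have : u ≤ p⁻¹ * exp (p * u) := by
      rw [le_inv_mul_iff₀ hp]; linarith [add_one_le_exp (p * u)]
    linarith [abs_of_nonneg hu, hpos (-(q * u)) hq]
  · have : -u ≤ q⁻¹ * exp (-(q * u)) := by
      rw [le_inv_mul_iff₀ hq]; linarith [add_one_le_exp (-(q * u))]
    linarith [abs_of_nonpos hu, hpos (p * u) hp]

theorem sub_le_mul_log_div {x y : ℝ} (hx : 0 ≤ x) (hy : 0 < y) : x - y ≤ x * log (x / y) := by
  have h := mul_le_mul_of_nonneg_left (self_sub_one_le_mul_log (div_nonneg hx hy.le)) hy.le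
  rwa [mul_sub, mul_div_cancel₀ _ hy.ne', mul_one, ← mul_assoc, mul_div_cancel₀ _ hy.ne'] at h

variable {ι : Type*} [Fintype ι] {y w : ι → ℝ}

theorem prod_rpow_eq_exp_sum (hy : ∀ k, 0 < y k) (w : ι → ℝ) :
    ∏ k, y k ^ w k = exp (∑ k, w k * log (y k)) := by
  simp only [exp_sum, rpow_def_of_pos (hy _), mul_comm]

theorem log_prod_rpow (hy : ∀ k, 0 < y k) (w : ι → ℝ) :
    log (∏ k, y k ^ w k) = ∑ k, w k * log (y k) := by
  rw [prod_rpow_eq_exp_sum hy, log_exp]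

theorem log_prod_rpow_div (hy : ∀ k, 0 < y k) (hw1 : ∑ k, w k = 1) (i : ι) :
    log ((∏ k, y k ^ w k) / y i) = ∑ k, w k * log (y k / y i) := by
  have hG : 0 < ∏ k, y k ^ w k := Finset.prod_pos fun k _ => rpow_pos_of_pos (hy k) _
  simp only [log_div hG.ne' (hy _).ne', log_div (hy _).ne' (hy i).ne', log_prod_rpow hy, mul_sub,
    Finset.sum_sub_distrib, ← Finset.sum_mul, hw1, one_mul]

theorem sum_mul_mul_log_div {x C : ℝ} (hx : 0 ≤ x) (hy : ∀ k, 0 < y k) (hw1 : ∑ k, w k = 1)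
    (hC : 0 < C) :
    ∑ k, w k * (x * log (x / y k)) = x * log (x / (C⁻¹ * ∏ k, y k ^ w k)) - x * log C := by
  rcases hx.eq_or_lt with rfl | hx
  · simp
  have hG : 0 < ∏ k, y k ^ w k := Finset.prod_pos fun k _ => rpow_pos_of_pos (hy k) _
  simp only [log_div hx.ne' (hy _).ne', log_div hx.ne' (mul_pos (inv_pos.2 hC) hG).ne',
    log_mul (inv_pos.2 hC).ne' hG.ne', log_inv, log_prod_rpow hy, mul_sub, Finset.sum_sub_distrib,
    ← Finset.sum_mul, hw1]
  simp only [mul_left_comm _ x, ← Finset.mul_sum]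
  ring

end Real

section MoveWeight

variable {ι : Type*} {w : ι → ℝ}

noncomputable def moveWeight (w : ι → ℝ) (i j : ι) : ι → ℝ :=
  w + w i • (Pi.single j 1 - Pi.single i 1)

theorem moveWeight_nonneg (hw : ∀ k, 0 ≤ w k) (i j k : ι) : 0 ≤ moveWeight w i j k := by
  have := hw k
  have := hw i
  simp only [moveWeight, Pi.add_apply, Pi.smul_apply, Pi.sub_apply, Pi.single_apply, smul_eq_mul]
  split_ifs <;> subst_vars <;> linarith

variable [Fintype ι]

theorem sum_moveWeight (w : ι → ℝ) (i j : ι) : ∑ k, moveWeight w i j k = ∑ k, w k := by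
  simp [moveWeight, Finset.sum_add_distrib, ← Finset.mul_sum, Finset.sum_sub_distrib]

theorem prod_rpow_moveWeight {y : ι → ℝ} (hy : ∀ k, 0 < y k) (w : ι → ℝ) (i j : ι) :
    ∏ k, y k ^ moveWeight w i j k = (∏ k, y k ^ w k) * exp (w i * (log (y j) - log (y i))) := by
  simp only [prod_rpow_eq_exp_sum hy, ← exp_add]
  congr 1
  simp [moveWeight, add_mul, Finset.sum_add_distrib, sub_mul, mul_assoc, Finset.sum_sub_distrib,
    ← Finset.mul_sum, Pi.single_apply]

end MoveWeight

namespace MeasureTheory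

variable {ι : Type*} [Fintype ι] {α : Type*} [MeasurableSpace α]
variable {ν : Measure α} {f : ι → α → ℝ} {w : ι → ℝ}

theorem aemeasurable_prod_rpow (hf : ∀ i, AEMeasurable (f i) ν) (w : ι → ℝ) :
    AEMeasurable (fun a => ∏ i, f i a ^ w i) ν :=
  Finset.aemeasurable_fun_prod _ fun i _ => (hf i).pow_const _

theorem integrable_prod_rpow (hf : ∀ i, Integrable (f i) ν) (hf0 : ∀ i, 0 ≤ᵐ[ν] f i)
    (hw0 : ∀ i, 0 ≤ w i) (hw1 : ∑ i, w i = 1) : Integrable (fun a => ∏ i, f i a ^ w i) ν := by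
  refine (integrable_finsetSum Finset.univ fun i _ => (hf i).const_mul (w i)).mono'
    (aemeasurable_prod_rpow (fun i => (hf i).aemeasurable) w).aestronglyMeasurable ?_
  filter_upwards [ae_all_iff.2 hf0] with a ha
  rw [Real.norm_of_nonneg (Finset.prod_nonneg fun i _ => rpow_nonneg (ha i) _)]
  exact geom_mean_le_arith_mean_weighted _ _ _ (fun i _ => hw0 i) hw1 fun i _ => ha i

theorem integrable_prod_rpow_mul_log_div (hf : ∀ i, Integrable (f i) ν)
    (hfpos : ∀ i, ∀ᵐ a ∂ν, 0 < f i a) (hw : ∀ i, 0 < w i) (hw1 : ∑ i, w i = 1) (i j : ι) :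
    Integrable (fun a => (∏ k, f k a ^ w k) * log (f j a / f i a)) ν := by
  have hmove : ∀ i j, Integrable (fun a => ∏ k, f k a ^ moveWeight w i j k) ν := fun i j =>
    integrable_prod_rpow hf (fun k => (hfpos k).mono fun _ h => h.le)
      (moveWeight_nonneg (fun k => (hw k).le) i j) (by rw [sum_moveWeight, hw1])
  have hmeas : AEMeasurable (fun a => (∏ k, f k a ^ w k) * log (f j a / f i a)) ν :=
    (aemeasurable_prod_rpow (fun k => (hf k).aemeasurable) w).mul
      ((hf j).aemeasurable.div (hf i).aemeasurable).log
  refine (((hmove i j).const_mul (w i)⁻¹).add ((hmove j i).const_mul (w j)⁻¹)).mono'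
    hmeas.aestronglyMeasurable ?_
  filter_upwards [ae_all_iff.2 hfpos] with a ha
  have hG : 0 < ∏ k, f k a ^ w k := Finset.prod_pos fun k _ => rpow_pos_of_pos (ha k) _
  have hu : log (f j a / f i a) = log (f j a) - log (f i a) := log_div (ha j).ne' (ha i).ne'
  calc ‖(∏ k, f k a ^ w k) * log (f j a / f i a)‖
      = (∏ k, f k a ^ w k) * |log (f j a) - log (f i a)| := by
        rw [norm_mul, Real.norm_of_nonneg hG.le, Real.norm_eq_abs, hu]
    _ ≤ (∏ k, f k a ^ w k) * ((w i)⁻¹ * exp (w i * (log (f j a) - log (f i a)))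
          + (w j)⁻¹ * exp (-(w j * (log (f j a) - log (f i a))))) :=
        mul_le_mul_of_nonneg_left (abs_le_inv_mul_exp_add_inv_mul_exp (hw i) (hw j) _) hG.le
    _ = (w i)⁻¹ * ∏ k, f k a ^ moveWeight w i j k
          + (w j)⁻¹ * ∏ k, f k a ^ moveWeight w j i k := by
        rw [prod_rpow_moveWeight ha, prod_rpow_moveWeight ha,
          ← neg_sub (log (f j a)) (log (f i a)), mul_neg]
        ring

theorem integrable_prod_rpow_mul_log_prod_rpow_div (hf : ∀ i, Integrable (f i) ν)
    (hfpos : ∀ i, ∀ᵐ a ∂ν, 0 < f i a) (hw : ∀ i, 0 < w i) (hw1 : ∑ i, w i = 1) (i : ι) :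
    Integrable (fun a => (∏ k, f k a ^ w k) * log ((∏ k, f k a ^ w k) / f i a)) ν := by
  refine (integrable_finsetSum Finset.univ fun j _ =>
    (integrable_prod_rpow_mul_log_div hf hfpos hw hw1 i j).const_mul (w j)).congr ?_
  filter_upwards [ae_all_iff.2 hfpos] with a ha
  simp only [log_prod_rpow_div ha hw1, Finset.mul_sum]
  exact Finset.sum_congr rfl fun j _ => mul_left_comm _ _ _

end MeasureTheory

section klDivR

variable {α : Type*} [MeasurableSpace α] {ν : Measure α}

theorem klDivR_of_integrable {f g : α → ℝ} (hg : ∀ᵐ a ∂ν, 0 < g a)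
    (h : Integrable (fun a => f a * log (f a / g a)) ν) :
    klDivR ν f g = ↑(∫ a, f a * log (f a / g a) ∂ν) :=
  if_pos ⟨h, hg.mono fun _ ha h0 => absurd h0 ha.ne'⟩

theorem klDivR_of_not_integrable {f g : α → ℝ}
    (h : ¬Integrable (fun a => f a * log (f a / g a)) ν) : klDivR ν f g = ⊤ :=
  if_neg fun h' => h h'.1

theorem klDivR_ne_bot (f g : α → ℝ) : klDivR ν f g ≠ ⊥ := by
  unfold klDivR
  split_ifs <;> simp

variable {ι : Type*} [Fintype ι] {d : α → ℝ} {f : ι → α → ℝ} {w : ι → ℝ}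

theorem sum_coe_mul_klDivR_eq_integral (hfpos : ∀ i, ∀ᵐ a ∂ν, 0 < f i a)
    (hint : ∀ i, Integrable (fun a => d a * log (d a / f i a)) ν) :
    ∑ i, (w i : EReal) * klDivR ν d (f i)
      = ↑(∫ a, ∑ i, w i * (d a * log (d a / f i a)) ∂ν) := by
  rw [integral_finsetSum _ fun i _ => (hint i).const_mul (w i), EReal.coe_finset_sum]
  refine Finset.sum_congr rfl fun i _ => ?_
  rw [klDivR_of_integrable (hfpos i) (hint i), integral_const_mul, EReal.coe_mul]

theorem sum_coe_mul_klDivR_eq_top (hw : ∀ i, 0 < w i)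
    (h : ¬∀ i, Integrable (fun a => d a * log (d a / f i a)) ν) :
    ∑ i, (w i : EReal) * klDivR ν d (f i) = ⊤ := by
  obtain ⟨i, hi⟩ := not_forall.1 h
  refine EReal.finset_sum_eq_top (fun j _ => ?_) (Finset.mem_univ i) ?_
  · exact (EReal.mul_ne_bot _ _).2 ⟨.inl (EReal.coe_ne_bot _), .inr (klDivR_ne_bot _ _),
      .inl (EReal.coe_ne_top _), .inl (EReal.coe_nonneg.2 (hw j).le)⟩
  · rw [klDivR_of_not_integrable hi, EReal.coe_mul_top_of_pos (hw i)]

end klDivR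

section GCI

variable {ι : Type*} [Fintype ι] {α : Type*} [MeasurableSpace α]
variable (ν : Measure α) (f : ι → α → ℝ) (w : ι → ℝ)

noncomputable def gciNormalizer : ℝ := ∫ a, ∏ i, f i a ^ w i ∂ν

noncomputable def gciFusion (a : α) : ℝ := (gciNormalizer ν f w)⁻¹ * ∏ i, f i a ^ w i

variable {ν f w}

theorem integrable_gciFusion (hf : ∀ i, Integrable (f i) ν) (hfpos : ∀ i, ∀ᵐ a ∂ν, 0 < f i a)
    (hw : ∀ i, 0 < w i) (hw1 : ∑ i, w i = 1) : Integrable (gciFusion ν f w) ν :=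
  (integrable_prod_rpow hf (fun i => (hfpos i).mono fun _ h => h.le) (fun i => (hw i).le)
    hw1).const_mul _

theorem integral_gciFusion (hC : 0 < gciNormalizer ν f w) : ∫ a, gciFusion ν f w a ∂ν = 1 := by
  simp only [gciFusion, integral_const_mul]
  exact inv_mul_cancel₀ hC.ne'

theorem gciFusion_pos (hfpos : ∀ i, ∀ᵐ a ∂ν, 0 < f i a) (hC : 0 < gciNormalizer ν f w) :
    ∀ᵐ a ∂ν, 0 < gciFusion ν f w a := by
  filter_upwards [ae_all_iff.2 hfpos] with a ha
  exact mul_pos (inv_pos.2 hC) (Finset.prod_pos fun i _ => rpow_pos_of_pos (ha i) _)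

theorem integrable_gciFusion_mul_log_div (hf : ∀ i, Integrable (f i) ν)
    (hfpos : ∀ i, ∀ᵐ a ∂ν, 0 < f i a) (hw : ∀ i, 0 < w i) (hw1 : ∑ i, w i = 1)
    (hC : 0 < gciNormalizer ν f w) (i : ι) :
    Integrable (fun a => gciFusion ν f w a * log (gciFusion ν f w a / f i a)) ν := by
  refine (((integrable_prod_rpow_mul_log_prod_rpow_div hf hfpos hw hw1 i).const_mul
    (gciNormalizer ν f w)⁻¹).add ((integrable_gciFusion hf hfpos hw hw1).const_mul
    (log (gciNormalizer ν f w)⁻¹))).congr ?_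
  filter_upwards [ae_all_iff.2 hfpos] with a ha
  have hG : 0 < ∏ k, f k a ^ w k := Finset.prod_pos fun k _ => rpow_pos_of_pos (ha k) _
  simp only [Pi.add_apply, gciFusion, mul_div_assoc]
  rw [log_mul (inv_pos.2 hC).ne' (div_pos hG (ha i)).ne']
  ring

theorem sum_mul_mul_log_div_eq_gciFusion {d : α → ℝ} (hd : 0 ≤ᵐ[ν] d)
    (hfpos : ∀ i, ∀ᵐ a ∂ν, 0 < f i a) (hw1 : ∑ i, w i = 1) (hC : 0 < gciNormalizer ν f w) :
    ∀ᵐ a ∂ν, ∑ i, w i * (d a * log (d a / f i a))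
      = d a * log (d a / gciFusion ν f w a) - d a * log (gciNormalizer ν f w) := by
  filter_upwards [hd, ae_all_iff.2 hfpos] with a hda ha
  exact sum_mul_mul_log_div hda ha hw1 hC

theorem sum_coe_mul_klDivR_gciFusion (hf : ∀ i, Integrable (f i) ν)
    (hfpos : ∀ i, ∀ᵐ a ∂ν, 0 < f i a) (hw : ∀ i, 0 < w i) (hw1 : ∑ i, w i = 1)
    (hC : 0 < gciNormalizer ν f w) :
    ∑ i, (w i : EReal) * klDivR ν (gciFusion ν f w) (f i) = ↑(-log (gciNormalizer ν f w)) := by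
  rw [sum_coe_mul_klDivR_eq_integral hfpos (integrable_gciFusion_mul_log_div hf hfpos hw hw1 hC)]
  have hpos := gciFusion_pos hfpos hC
  have hid : ∀ᵐ a ∂ν, ∑ i, w i * (gciFusion ν f w a * log (gciFusion ν f w a / f i a))
      = -log (gciNormalizer ν f w) * gciFusion ν f w a := by
    filter_upwards [sum_mul_mul_log_div_eq_gciFusion (hpos.mono fun _ h => h.le) hfpos hw1 hC, hpos]
      with a h ha
    rw [h, div_self ha.ne', log_one]
    ring
  rw [integral_congr_ae hid, integral_const_mul, integral_gciFusion hC, mul_one]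

theorem neg_log_gciNormalizer_le_sum_coe_mul_klDivR (hf : ∀ i, Integrable (f i) ν)
    (hfpos : ∀ i, ∀ᵐ a ∂ν, 0 < f i a) (hw : ∀ i, 0 < w i) (hw1 : ∑ i, w i = 1)
    (hC : 0 < gciNormalizer ν f w) {g : α → ℝ} (hg0 : 0 ≤ᵐ[ν] g) (hg1 : ∫ a, g a ∂ν = 1) :
    ↑(-log (gciNormalizer ν f w)) ≤ ∑ i, (w i : EReal) * klDivR ν g (f i) := by
  by_cases hint : ∀ i, Integrable (fun a => g a * log (g a / f i a)) ν
  swap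
  · rw [sum_coe_mul_klDivR_eq_top hw hint]
    exact le_top
  rw [sum_coe_mul_klDivR_eq_integral hfpos hint, EReal.coe_le_coe_iff]
  have hg : Integrable g ν := .of_integral_ne_zero (by simp [hg1])
  have hfus := integrable_gciFusion hf hfpos hw hw1
  have hgf : Integrable (fun a => g a - gciFusion ν f w a) ν := hg.sub hfus
  calc -log (gciNormalizer ν f w)
      = ∫ a, g a - gciFusion ν f w a - log (gciNormalizer ν f w) * g a ∂ν := by
        rw [integral_sub hgf (hg.const_mul _), integral_sub hg hfus, integral_const_mul, hg1,
          integral_gciFusion hC]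
        ring
    _ ≤ ∫ a, ∑ i, w i * (g a * log (g a / f i a)) ∂ν := by
        refine integral_mono_ae (hgf.sub (hg.const_mul _))
          (integrable_finsetSum _ fun i _ => (hint i).const_mul (w i)) ?_
        filter_upwards [sum_mul_mul_log_div_eq_gciFusion hg0 hfpos hw1 hC, hg0,
          gciFusion_pos hfpos hC] with a h hga ha
        rw [h]
        linarith [sub_le_mul_log_div hga ha]

end GCI

theorem gci_minimizes_weighted_kl_general {α : Type*} [MeasurableSpace α]
    (ν : Measure α)
    {I : Type*} [Fintype I]
    (f : I → α → ℝ)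
    (hfpos : ∀ i, ∀ᵐ a ∂ν, 0 < f i a)
    (hfint : ∀ i, ∫ a, f i a ∂ν = 1)
    (w : I → ℝ) (hw : ∀ i, 0 < w i) (hw1 : ∑ i, w i = 1)
    (C : ℝ) (hC : C = ∫ a, ∏ i, f i a ^ w i ∂ν) (hCpos : 0 < C)
    (fGCI : α → ℝ) (hfGCI : fGCI = fun a => C⁻¹ * ∏ i, f i a ^ w i)
    (g : α → ℝ) (hg0 : ∀ᵐ a ∂ν, 0 ≤ g a)
    (hgint : ∫ a, g a ∂ν = 1) :
    (∑ i, (w i : EReal) * klDivR ν fGCI (f i))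
      ≤ ∑ i, (w i : EReal) * klDivR ν g (f i) := by
  subst hC hfGCI
  have hf : ∀ i, Integrable (f i) ν := fun i => .of_integral_ne_zero (by simp [hfint])
  exact (sum_coe_mul_klDivR_gciFusion hf hfpos hw hw1 hCpos).trans_le
    (neg_log_gciNormalizer_le_sum_coe_mul_klDivR hf hfpos hw hw1 hCpos hg0 hgint)

/-- The KLA characterization of GCI fusion: the normalized weighted geometric mean
`fGCI = C⁻¹ ∏ i, f i ^ w i` minimizes the weighted sum of Kullback–Leibler
divergences `∑ i, w i * D_KL(f ‖ f i)` over all probability densities `f` w.r.t. `ν`. -/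
theorem gci_minimizes_weighted_kl {α : Type*} [MeasurableSpace α]
    (ν : Measure α) [SigmaFinite ν]
    {I : Type*} [Fintype I] [Nonempty I]
    (f : I → α → ℝ) (hfmeas : ∀ i, Measurable (f i))
    (hfpos : ∀ i, ∀ᵐ a ∂ν, 0 < f i a)
    (hfint : ∀ i, ∫ a, f i a ∂ν = 1)
    (w : I → ℝ) (hw : ∀ i, 0 < w i) (hw1 : ∑ i, w i = 1)
    (C : ℝ) (hC : C = ∫ a, ∏ i, f i a ^ w i ∂ν) (hCpos : 0 < C)
    (hCfin : Integrable (fun a => ∏ i, f i a ^ w i) ν)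
    (fGCI : α → ℝ) (hfGCI : fGCI = fun a => C⁻¹ * ∏ i, f i a ^ w i)
    (g : α → ℝ) (hgmeas : Measurable g) (hg0 : ∀ᵐ a ∂ν, 0 ≤ g a)
    (hgint : ∫ a, g a ∂ν = 1) :
    (∑ i, (w i : EReal) * klDivR ν fGCI (f i))
      ≤ ∑ i, (w i : EReal) * klDivR ν g (f i) :=
  gci_minimizes_weighted_kl_general ν f hfpos hfint w hw hw1 C hC hCpos fGCI hfGCI g hg0 hgint
end
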